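/- There is an absolute constant κ > 0 such that for every n ≥ 1 and every symmetric function f ∈ 𝕊_n, there exist u ∈ ℝ^{4n+2} and c ∈ ℝ with ‖u‖² + c² = 1 such that f(x)·(u·v_x + c) ≥ κ/n for all x ∈ {0,1}^n, where v_x is the hidden-layer embedding under the explicit initialization. That is, any labeling of the embedded cube that agrees with a symmetric function is linearly separable with margin Ω(1/n). -/

import Mathlib

/-- The Hamming weight |x| of x ∈ {0,1}^n. -/
def hw {n : ℕ} (x : Fin n → Bool) : ℕ := (Finset.univ.filter (fun i => x i)).card

/-- The symmetric function f_A : f_A(x) = 1 if |x| ∈ A, and −1 otherwise. -/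
def fA {n : ℕ} (A : Finset ℕ) (x : Fin n → Bool) : ℝ := if hw x ∈ A then 1 else -1

/-- x ∈ {0,1}^n viewed as a real vector. -/
def toR {n : ℕ} (x : Fin n → Bool) : Fin n → ℝ := fun i => if x i then 1 else 0

/-- Explicit initialization of the hidden weights: W⁰_{ij} = (−1)^{i+1} for 1-indexed
i ∈ {1,...,4n+2}; in 0-indexed form W⁰ i j = (−1)^i. -/
def W0 (n : ℕ) : Matrix (Fin (4 * n + 2)) (Fin n) ℝ := fun i _ => (-1 : ℝ) ^ (i : ℕ)

/-- Explicit initialization of the hidden biases: B⁰_i = 0.5·(−1)^i·⌊(i−1)/2⌋ for 1-indexed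
i ∈ {1,...,4n+2}; in 0-indexed form B⁰ i = 0.5·(−1)^{i+1}·⌊i/2⌋. -/
noncomputable def B0 (n : ℕ) : Fin (4 * n + 2) → ℝ :=
  fun i => 0.5 * (-1 : ℝ) ^ ((i : ℕ) + 1) * (((i : ℕ) / 2 : ℕ) : ℝ)

/-- The hidden-layer embedding v_x = ReLU(W⁰x + B⁰) under the explicit initialization. -/
noncomputable def vX (n : ℕ) (x : Fin n → Bool) : Fin (4 * n + 2) → ℝ :=
  fun i => max 0 ((W0 n).mulVec (toR x) i + B0 n i)

/-! On an even coordinate `2m` the embedding is `max 0 (|x| - m/2)`, so `2e_{4j+2} - 2e_{4j+4}`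
reads off the indicator `[j < |x|]`. Encoding `f_A` as `s |x|` with `s : ℕ → {±1}`, the vector
`u₀ = ∑_{j<n} (s (j+1) - s j) (2e_{4j+2} - 2e_{4j+4})` telescopes to `u₀ · v_x = s |x| - s 0`.
Hence `(u₀, s 0)` separates with margin `1`, and by Cauchy–Schwarz it has norm at most `6n`;
normalising gives margin `1/(6n)`. -/

open Finset Matrix

theorem sum_sq_sum_le_card_mul {ι κ : Type*} [Fintype κ] (S : Finset ι) (w : ι → κ → ℝ) :
    ∑ k, (∑ j ∈ S, w j k) ^ 2 ≤ #S * ∑ j ∈ S, ∑ k, w j k ^ 2 :=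
  calc ∑ k, (∑ j ∈ S, w j k) ^ 2 ≤ ∑ k, #S * ∑ j ∈ S, w j k ^ 2 :=
        sum_le_sum fun _ _ => sq_sum_le_card_mul_sum_sq
    _ = #S * ∑ j ∈ S, ∑ k, w j k ^ 2 := by rw [← mul_sum, sum_comm]

theorem exists_unit_margin_of_margin {X m : Type*} [Fintype m] (v : X → m → ℝ) (f : X → ℝ)
    (u₀ : m → ℝ) (c₀ γ M : ℝ) (hγ : 0 ≤ γ) (hpos : 0 < ∑ i, u₀ i ^ 2 + c₀ ^ 2)
    (hM : √(∑ i, u₀ i ^ 2 + c₀ ^ 2) ≤ M) (hmargin : ∀ x, γ ≤ f x * (u₀ ⬝ᵥ v x + c₀)) :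
    ∃ (u : m → ℝ) (c : ℝ), ∑ i, u i ^ 2 + c ^ 2 = 1 ∧ ∀ x, γ / M ≤ f x * (u ⬝ᵥ v x + c) := by
  set r := √(∑ i, u₀ i ^ 2 + c₀ ^ 2)
  have hr : 0 < r := Real.sqrt_pos.2 hpos
  refine ⟨r⁻¹ • u₀, r⁻¹ * c₀, ?_, fun x => ?_⟩
  · simp only [Pi.smul_apply, smul_eq_mul, mul_pow, ← mul_sum, ← mul_add, inv_pow,
      Real.sq_sqrt hpos.le, r]
    exact inv_mul_cancel₀ hpos.ne'
  · calc γ / M ≤ γ / r := div_le_div_of_nonneg_left hγ hr hM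
      _ ≤ f x * (u₀ ⬝ᵥ v x + c₀) / r := by gcongr; exact hmargin x
      _ = f x * ((r⁻¹ • u₀) ⬝ᵥ v x + r⁻¹ * c₀) := by
        rw [smul_dotProduct, smul_eq_mul]; field_simp

theorem sum_toR {n : ℕ} (x : Fin n → Bool) : ∑ j, toR x j = hw x := by
  simp [toR, hw, sum_boole]

theorem hw_le {n : ℕ} (x : Fin n → Bool) : hw x ≤ n :=
  (card_filter_le _ _).trans_eq (card_fin n)

theorem vX_two_mul {n : ℕ} (x : Fin n → Bool) (m : ℕ) (h : 2 * m < 4 * n + 2) :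
    vX n x ⟨2 * m, h⟩ = max 0 ((hw x : ℝ) - m / 2) := by
  simp only [vX, W0, B0, mulVec, dotProduct, ← mul_sum, sum_toR, Nat.mul_div_cancel_left m two_pos]
  congr 1
  norm_num [pow_succ, pow_mul]
  ring

theorem two_mul_max_sub_two_mul_max (K j : ℕ) :
    2 * max 0 ((K : ℝ) - j - 1 / 2) - 2 * max 0 ((K : ℝ) - j - 1) = if j < K then 1 else 0 := by
  split_ifs with h
  · have : (j : ℝ) + 1 ≤ K := by exact_mod_cast h
    rw [max_eq_right (by linarith), max_eq_right (by linarith)]; ring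
  · have : (K : ℝ) ≤ j := by exact_mod_cast not_lt.1 h
    rw [max_eq_left (by linarith), max_eq_left (by linarith)]; ring

noncomputable def stepVec {n : ℕ} (j : Fin n) : Fin (4 * n + 2) → ℝ :=
  Pi.single ⟨2 * (2 * j + 1), by omega⟩ 2 - Pi.single ⟨2 * (2 * j + 2), by omega⟩ 2

theorem stepVec_dotProduct_vX {n : ℕ} (j : Fin n) (x : Fin n → Bool) :
    stepVec j ⬝ᵥ vX n x = if (j : ℕ) < hw x then 1 else 0 := by
  rw [stepVec, sub_dotProduct, single_dotProduct, single_dotProduct, vX_two_mul, vX_two_mul,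
    ← two_mul_max_sub_two_mul_max]
  push_cast
  ring_nf

theorem sum_stepVec_sq {n : ℕ} (j : Fin n) : ∑ i, stepVec j i ^ 2 = 8 := by
  simp only [sq]
  change stepVec j ⬝ᵥ stepVec j = 8
  norm_num [stepVec, dotProduct_sub]

noncomputable def sepVec (n : ℕ) (s : ℕ → ℝ) : Fin (4 * n + 2) → ℝ :=
  ∑ j : Fin n, (s (j + 1) - s j) • stepVec j

theorem sepVec_dotProduct_vX (n : ℕ) (s : ℕ → ℝ) (x : Fin n → Bool) :
    sepVec n s ⬝ᵥ vX n x = s (hw x) - s 0 := by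
  simp only [sepVec, sum_dotProduct, smul_dotProduct, stepVec_dotProduct_vX, smul_eq_mul, mul_ite,
    mul_one, mul_zero, ← mem_range (n := hw x)]
  rw [Fin.sum_univ_eq_sum_range (fun j => if j ∈ range (hw x) then s (j + 1) - s j else 0),
    sum_ite_mem, inter_eq_right.2 (range_subset_range.2 (hw_le x)), sum_range_sub]

theorem sum_sepVec_sq_le (n : ℕ) (s : ℕ → ℝ) (hs : ∀ j, |s j| ≤ 1) :
    ∑ i, sepVec n s i ^ 2 ≤ 32 * n ^ 2 := by
  have hstep : ∀ j : Fin n, ∑ i, ((s (j + 1) - s j) • stepVec j) i ^ 2 ≤ 32 := fun j => by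
    have hd : |s (j + 1) - s j| ≤ 2 := (abs_sub _ _).trans (by linarith [hs (j + 1), hs j])
    have hd2 : (s (j + 1) - s j) ^ 2 ≤ 2 ^ 2 := sq_le_sq' (abs_le.1 hd).1 (abs_le.1 hd).2
    simp only [Pi.smul_apply, smul_eq_mul, mul_pow, ← mul_sum, sum_stepVec_sq]
    linarith
  calc ∑ i, sepVec n s i ^ 2 = ∑ i, (∑ j : Fin n, ((s (j + 1) - s j) • stepVec j) i) ^ 2 := by
        simp only [sepVec, Finset.sum_apply]
    _ ≤ #(univ : Finset (Fin n)) * ∑ j : Fin n, ∑ i, ((s (j + 1) - s j) • stepVec j) i ^ 2 :=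
        sum_sq_sum_le_card_mul _ _
    _ ≤ n * ∑ _j : Fin n, 32 := by rw [card_fin]; gcongr with j; exact hstep j
    _ = 32 * n ^ 2 := by rw [sum_const, card_univ, Fintype.card_fin, nsmul_eq_mul]; ring

/-- Any labeling of the embedded cube that agrees with a symmetric function is linearly
separable with margin Ω(1/n). -/
theorem stmt11 :
    ∃ κ : ℝ, 0 < κ ∧
      ∀ n : ℕ, 1 ≤ n → ∀ f : (Fin n → Bool) → ℝ,
        (∃ A : Finset ℕ, A ⊆ Finset.range (n + 1) ∧ f = fA A) →
        ∃ (u : Fin (4 * n + 2) → ℝ) (c : ℝ),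
          (∑ i, (u i) ^ 2) + c ^ 2 = 1 ∧
          ∀ x : Fin n → Bool, κ / (n : ℝ) ≤ f x * ((∑ i, u i * vX n x i) + c) := by
  refine ⟨1 / 6, by norm_num, ?_⟩
  rintro n hn _ ⟨A, -, rfl⟩
  set s : ℕ → ℝ := fun j => if j ∈ A then 1 else -1
  have hs_mul_self : ∀ j, s j * s j = 1 := fun j => by by_cases h : j ∈ A <;> simp [s, h]
  have hs_abs : ∀ j, |s j| ≤ 1 := fun j => by by_cases h : j ∈ A <;> simp [s, h]
  have hmargin : ∀ x, 1 ≤ fA A x * (sepVec n s ⬝ᵥ vX n x + s 0) := fun x => by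
    rw [sepVec_dotProduct_vX, sub_add_cancel]
    exact (hs_mul_self (hw x)).ge
  have hpos : 0 < ∑ i, sepVec n s i ^ 2 + s 0 ^ 2 := by
    have := hs_mul_self 0
    nlinarith [sum_nonneg fun i (_ : i ∈ univ) => sq_nonneg (sepVec n s i)]
  have hnorm : √(∑ i, sepVec n s i ^ 2 + s 0 ^ 2) ≤ 6 * n := by
    have h1 : (1 : ℝ) ≤ n := by exact_mod_cast hn
    have := sum_sepVec_sq_le n s hs_abs
    exact Real.sqrt_le_iff.2 ⟨by positivity, by nlinarith [hs_mul_self 0]⟩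
  obtain ⟨u, c, hunit, hu⟩ :=
    exists_unit_margin_of_margin _ _ _ _ _ _ zero_le_one hpos hnorm hmargin
  refine ⟨u, c, hunit, fun x => ?_⟩
  rw [div_div]
  exact hu x
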